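/- Consequently, the Bernoulli interaction index I(A;F) = ∑_{S⊆A^c} Q_A(S) ∑_{B⊆A} (−1)^{|A\B|} E[F|S∪B], with Q_A(S) = ∏_{i∈S} θ_i ∏_{i∈A^c\S} (1−θ_i), satisfies I(A;F) = ∑_{B⊆A} (−1)^{|A\B|} E[F(Z_B)], where Z_B has independent coordinates: constant e_i for i ∈ B, distribution P_i for i ∈ A\B, and distribution θ_i·δ_i + (1−θ_i)·P_i for i ∈ A^c. In particular I(A;F) is a signed sum of 2^{|A|} expected values of F under product distributions. -/
import Mathlib


open Finset

/-- `E[F|T]`: conditional expectation of `F` given that features in `T` take the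
reference values `e`. -/
noncomputable def condExp {n : ℕ} {Ω : Fin n → Type*} [∀ i, Fintype (Ω i)]
    [∀ i, DecidableEq (Ω i)] (P : ∀ i, Ω i → ℝ) (e : ∀ i, Ω i)
    (F : (∀ i, Ω i) → ℝ) (T : Finset (Fin n)) : ℝ :=
  ∑ ω : ∀ i, Ω i, F ω * (∏ i ∈ T, if ω i = e i then (1 : ℝ) else 0) * ∏ i ∈ Tᶜ, P i (ω i)

/-- The Bernoulli interaction index `I(A;F)` is a signed sum of `2^{|A|}` expected
values of `F` under product distributions. -/
theorem bernoulli_interaction_index {n : ℕ} {Ω : Fin n → Type*} [∀ i, Fintype (Ω i)]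
    [∀ i, Nonempty (Ω i)] [∀ i, DecidableEq (Ω i)]
    (P : ∀ i, Ω i → ℝ) (hP0 : ∀ i x, 0 ≤ P i x) (hP1 : ∀ i, ∑ x, P i x = 1)
    (e : ∀ i, Ω i) (F : (∀ i, Ω i) → ℝ)
    (A : Finset (Fin n)) (θ : Fin n → ℝ) (hθ : ∀ i ∈ Aᶜ, θ i ∈ Set.Icc (0 : ℝ) 1) :
    ∑ S ∈ Aᶜ.powerset,
        ((∏ i ∈ S, θ i) * ∏ i ∈ Aᶜ \ S, (1 - θ i)) *
          ∑ B ∈ A.powerset, (-1 : ℝ) ^ ((A \ B).card) * condExp P e F (S ∪ B)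
      = ∑ B ∈ A.powerset, (-1 : ℝ) ^ ((A \ B).card) *
          ∑ ω : ∀ i, Ω i, F ω *
            (∏ i ∈ B, if ω i = e i then (1 : ℝ) else 0) *
            (∏ i ∈ A \ B, P i (ω i)) *
            ∏ i ∈ Aᶜ, (θ i * (if ω i = e i then (1 : ℝ) else 0) + (1 - θ i) * P i (ω i)) := by
  -- expand condExp on the left
  have hsplit : ∀ S ∈ Aᶜ.powerset, ∀ B ∈ A.powerset,
      condExp P e F (S ∪ B) =
        ∑ ω : ∀ i, Ω i, F ω *
          ((∏ i ∈ B, if ω i = e i then (1 : ℝ) else 0) *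
           (∏ i ∈ A \ B, P i (ω i)) *
           ((∏ i ∈ S, if ω i = e i then (1 : ℝ) else 0) *
            ∏ i ∈ Aᶜ \ S, P i (ω i))) := by
    intro S hS B hB
    rw [mem_powerset] at hS hB
    have hdisj : Disjoint S B := by
      refine disjoint_left.2 fun i hiS hiB => ?_
      exact (mem_compl.1 (hS hiS)) (hB hiB)
    have hdisj2 : Disjoint (A \ B) (Aᶜ \ S) := by
      refine disjoint_left.2 fun i hi hi' => ?_
      exact (mem_compl.1 (mem_sdiff.1 hi').1) (mem_sdiff.1 hi).1
    have hcompl : (S ∪ B)ᶜ = (A \ B) ∪ (Aᶜ \ S) := by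
      ext i
      simp only [mem_compl, mem_union, mem_sdiff, mem_compl]
      constructor
      · intro h
        push_neg at h
        by_cases hiA : i ∈ A
        · exact Or.inl ⟨hiA, h.2⟩
        · exact Or.inr ⟨hiA, h.1⟩
      · intro h hmem
        rcases h with ⟨hiA, hiB⟩ | ⟨hiA, hiS⟩ <;> rcases hmem with h | h
        · exact (mem_compl.1 (hS h)) hiA
        · exact hiB h
        · exact hiS h
        · exact hiA (hB h)
    unfold condExp
    refine Finset.sum_congr rfl fun ω _ => ?_
    rw [Finset.prod_union hdisj, hcompl, Finset.prod_union hdisj2]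
    ring
  -- rewrite the RHS per-ω product via prod_add
  have hrhs : ∀ (ω : ∀ i, Ω i),
      (∏ i ∈ Aᶜ, (θ i * (if ω i = e i then (1 : ℝ) else 0) + (1 - θ i) * P i (ω i)))
        = ∑ S ∈ Aᶜ.powerset,
            (∏ i ∈ S, θ i * (if ω i = e i then (1 : ℝ) else 0)) *
              ∏ i ∈ Aᶜ \ S, (1 - θ i) * P i (ω i) := by
    intro ω
    exact Finset.prod_add _ _ _
  calc
    ∑ S ∈ Aᶜ.powerset,
        ((∏ i ∈ S, θ i) * ∏ i ∈ Aᶜ \ S, (1 - θ i)) *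
          ∑ B ∈ A.powerset, (-1 : ℝ) ^ ((A \ B).card) * condExp P e F (S ∪ B)
      = ∑ S ∈ Aᶜ.powerset, ∑ B ∈ A.powerset, ∑ ω : ∀ i, Ω i,
          (-1 : ℝ) ^ ((A \ B).card) * (F ω *
            ((∏ i ∈ B, if ω i = e i then (1 : ℝ) else 0) *
             (∏ i ∈ A \ B, P i (ω i)) *
             ((∏ i ∈ S, θ i * (if ω i = e i then (1 : ℝ) else 0)) *
              ∏ i ∈ Aᶜ \ S, (1 - θ i) * P i (ω i)))) := by
        refine Finset.sum_congr rfl fun S hS => ?_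
        rw [Finset.mul_sum]
        refine Finset.sum_congr rfl fun B hB => ?_
        rw [hsplit S hS B hB, Finset.mul_sum, Finset.mul_sum]
        refine Finset.sum_congr rfl fun ω _ => ?_
        rw [Finset.prod_mul_distrib, Finset.prod_mul_distrib]
        ring
    _ = ∑ B ∈ A.powerset, (-1 : ℝ) ^ ((A \ B).card) *
          ∑ ω : ∀ i, Ω i, F ω *
            (∏ i ∈ B, if ω i = e i then (1 : ℝ) else 0) *
            (∏ i ∈ A \ B, P i (ω i)) *
            ∏ i ∈ Aᶜ, (θ i * (if ω i = e i then (1 : ℝ) else 0) + (1 - θ i) * P i (ω i)) := by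
        rw [Finset.sum_comm]
        refine Finset.sum_congr rfl fun B hB => ?_
        rw [Finset.mul_sum]
        rw [Finset.sum_comm]
        refine Finset.sum_congr rfl fun ω _ => ?_
        rw [hrhs ω, Finset.mul_sum, Finset.mul_sum]
        refine Finset.sum_congr rfl fun S hS => ?_
        ring
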